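/- Let Φ ∈ ℝ^{n×n} be a real circulant matrix with first column φ, let m ≥ 1, let W = diag(w) where w_k = w(|λ_k|) for a function w : ℝ → ℝ_{>0} and λ_k the eigenvalues of Φ, and let R ∈ ℝ^{ν×n} be a real restriction (selection) matrix. If the normal-equations matrix R F* W F Rᵀ is invertible, then the minimizer ψ ∈ ℂ^ν of ‖W^{1/2} F (φ^{(m)} − Rᵀ ψ)‖₂², where φ^{(m)} is the first column of Φ^m, is real valued. -/

import Mathlib

/-!
A minimizer `ψ` of a weighted least-squares functional `χ ↦ ∑ₖ wₖ ‖(b - A χ)ₖ‖²` satisfies the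
normal equations `Aᴴ W A ψ = Aᴴ W b`: moving `ψ` by `t • Aᴴ W (b - A ψ)` changes the functional
by `-2 t ‖Aᴴ W (b - A ψ)‖² + O(t²)`, which is nonnegative for all real `t` only if
`Aᴴ W (b - A ψ) = 0`.

The entries of the DFT matrix satisfy `conj F_{jk} = F_{-j,k}`. Hence for real `φ` the eigenvalues
of the circulant matrix satisfy `λ_{-k} = conj λ_k`, the weights are even, and reindexing
`k ↦ -k` shows that `Fᴴ W F` is real. The normal equations of the theorem therefore have a real
invertible matrix and a real right-hand side, so `conj ψ` solves them as well and `ψ = conj ψ`.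
-/

open scoped Matrix ComplexOrder
open Complex ComplexConjugate Matrix

section LeastSquares

variable {ι κ : Type*} [Fintype ι] [Fintype κ]

theorem sum_mul_norm_sub_ofReal_smul_sq [DecidableEq ι] (w : ι → ℝ) (r a : ι → ℂ) (t : ℝ) :
    ∑ k, w k * ‖(r - (t : ℂ) • a) k‖ ^ 2 = ∑ k, w k * ‖r k‖ ^ 2
      - 2 * t * (star a ⬝ᵥ (diagonal (fun k => (w k : ℂ)) *ᵥ r)).re
      + t ^ 2 * ∑ k, w k * ‖a k‖ ^ 2 := by
  simp only [dotProduct, mulVec_diagonal, re_sum, Finset.mul_sum, ← Finset.sum_sub_distrib,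
    ← Finset.sum_add_distrib]
  refine Finset.sum_congr rfl fun k _ => ?_
  simp only [Pi.sub_apply, Pi.smul_apply, smul_eq_mul, ← normSq_eq_norm_sq, normSq_sub,
    normSq_ofReal, Pi.star_apply, RCLike.star_def, map_mul, conj_ofReal, mul_re, mul_im,
    ofReal_re, ofReal_im, conj_re, conj_im]
  ring

theorem star_mulVec_dotProduct (A : Matrix ι κ ℂ) (d : κ → ℂ) (v : ι → ℂ) :
    star (A *ᵥ d) ⬝ᵥ v = star d ⬝ᵥ (Aᴴ *ᵥ v) := by
  rw [star_mulVec, dotProduct_mulVec]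

theorem re_star_dotProduct_self_eq_zero {v : κ → ℂ} : (star v ⬝ᵥ v).re = 0 ↔ v = 0 := by
  have him : (star v ⬝ᵥ v).im = 0 := (nonneg_iff.mp (dotProduct_star_self_nonneg v)).2.symm
  rw [← dotProduct_star_self_eq_zero, Complex.ext_iff, him]
  simp

theorem eq_zero_of_forall_two_mul_mul_le_sq_mul {S Q : ℝ}
    (h : ∀ t : ℝ, 2 * t * S ≤ t ^ 2 * Q) : S = 0 := by
  have := discrim_le_zero (a := Q) (b := -2 * S) (c := 0) fun t => by linarith [h t]
  rw [discrim] at this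
  nlinarith

theorem weighted_normal_equations_of_minimizer [DecidableEq ι] (A : Matrix ι κ ℂ) (b : ι → ℂ)
    (w : ι → ℝ) (ψ : κ → ℂ)
    (hmin : ∀ χ, ∑ k, w k * ‖(b - A *ᵥ ψ) k‖ ^ 2 ≤ ∑ k, w k * ‖(b - A *ᵥ χ) k‖ ^ 2) :
    (Aᴴ * diagonal (fun k => (w k : ℂ)) * A) *ᵥ ψ
      = (Aᴴ * diagonal (fun k => (w k : ℂ))) *ᵥ b := by
  set c := (Aᴴ * diagonal (fun k => (w k : ℂ))) *ᵥ (b - A *ᵥ ψ) with hc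
  suffices c = 0 by
    rwa [hc, mulVec_sub, mulVec_mulVec, sub_eq_zero, eq_comm] at this
  have hstep (t : ℝ) : b - A *ᵥ (ψ + (t : ℂ) • c) = (b - A *ᵥ ψ) - (t : ℂ) • (A *ᵥ c) := by
    rw [mulVec_add, mulVec_smul]; abel
  refine re_star_dotProduct_self_eq_zero.mp <| eq_zero_of_forall_two_mul_mul_le_sq_mul
    (Q := ∑ k, w k * ‖(A *ᵥ c) k‖ ^ 2) fun t => ?_
  have := hmin (ψ + (t : ℂ) • c)
  rw [hstep, sum_mul_norm_sub_ofReal_smul_sq, star_mulVec_dotProduct, mulVec_mulVec, ← hc]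
    at this
  linarith

end LeastSquares

noncomputable def dftMatrix (n : ℕ) : Matrix (Fin n) (Fin n) ℂ :=
  of fun j k => exp (-(2 * Real.pi * I * (j.val : ℂ) * (k.val : ℂ)) / n)

namespace dftMatrix

variable {n : ℕ}

theorem apply_comm (j k : Fin n) : dftMatrix n j k = dftMatrix n k j := by
  simp only [dftMatrix, of_apply, mul_right_comm _ (j.val : ℂ)]

theorem conj_apply [NeZero n] (j k : Fin n) : conj (dftMatrix n j k) = dftMatrix n (-j) k := by
  obtain ⟨q, hq⟩ : n ∣ j.val + (-j).val := by
    rw [Nat.dvd_iff_mod_eq_zero, ← Fin.val_add, add_neg_cancel, Fin.val_zero]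
  have hq' : (j.val : ℂ) + ((-j).val : ℂ) = n * q := by exact_mod_cast hq
  have hn : (n : ℂ) ≠ 0 := Nat.cast_ne_zero.mpr (NeZero.ne n)
  rw [dftMatrix, of_apply, of_apply, ← exp_conj, exp_eq_exp_iff_exists_int]
  refine ⟨q * k.val, ?_⟩
  simp only [map_div₀, map_neg, map_mul, conj_ofReal, conj_I, map_natCast, map_ofNat]
  field_simp
  push_cast
  linear_combination (k.val : ℂ) * hq'

theorem conj_apply' [NeZero n] (j k : Fin n) : conj (dftMatrix n j k) = dftMatrix n j (-k) := by
  rw [apply_comm, conj_apply, apply_comm]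

theorem conj_sum_ofReal_mul_apply [NeZero n] (φ : Fin n → ℝ) (k : Fin n) :
    conj (∑ j, (φ j : ℂ) * dftMatrix n j k) = ∑ j, (φ j : ℂ) * dftMatrix n j (-k) := by
  simp only [map_sum, map_mul, conj_ofReal, conj_apply']

end dftMatrix

section Conj

variable {ι κ : Type*}

theorem conj_comp_mulVec [Fintype κ] (M : Matrix ι κ ℂ) (v : κ → ℂ) :
    conj ∘ (M *ᵥ v) = M.map conj *ᵥ (conj ∘ v) :=
  funext (RingHom.map_mulVec _ M v)

theorem map_conj_map_ofReal (M : Matrix ι κ ℝ) : (M.map ofReal).map conj = M.map ofReal := by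
  ext; simp

theorem map_conj_pow [Fintype κ] [DecidableEq κ] {M : Matrix κ κ ℂ} (hM : M.map conj = M)
    (m : ℕ) : (M ^ m).map conj = M ^ m := by
  rw [← RingHom.mapMatrix_apply, map_pow, RingHom.mapMatrix_apply, hM]

theorem conj_comp_eq_of_mulVec_eq [Fintype κ] [DecidableEq κ] {M : Matrix κ κ ℂ}
    (hM : M.map conj = M) (hunit : IsUnit M) {ψ g : κ → ℂ} (h : M *ᵥ ψ = g)
    (hg : conj ∘ g = g) : conj ∘ ψ = ψ :=
  mulVec_injective_iff_isUnit.mpr hunit <| by rw [← h, conj_comp_mulVec, hM] at hg; rw [hg]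

theorem map_conj_conjTranspose_mul_diagonal_mul [Fintype ι] [DecidableEq ι] (F : Matrix ι κ ℂ)
    (e : ι ≃ ι) (w : ι → ℝ) (hF : ∀ i j, conj (F i j) = F (e i) j) (hw : ∀ i, w (e i) = w i) :
    (Fᴴ * diagonal (fun i => (w i : ℂ)) * F).map conj
      = Fᴴ * diagonal (fun i => (w i : ℂ)) * F := by
  ext j l
  rw [Matrix.mul_assoc, map_apply, mul_apply, map_sum]
  simp only [diagonal_mul, conjTranspose_apply, map_mul, conj_ofReal, RCLike.star_def, conj_conj]
  exact Fintype.sum_equiv e _ _ fun k => by rw [← hF, ← hF, conj_conj, hw]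

end Conj

theorem weighted_lsq_minimizer_real_general (n ν : ℕ) (hn : 0 < n) (φ : Fin n → ℝ)
    (m : ℕ)
    (Φ : Matrix (Fin n) (Fin n) ℂ)
    (hΦ : Φ = Matrix.circulant (fun j => (φ j : ℂ)))
    (F : Matrix (Fin n) (Fin n) ℂ)
    (hF : ∀ j k : Fin n, F j k =
      Complex.exp (-(2 * Real.pi * Complex.I * (j.val : ℂ) * (k.val : ℂ)) / n))
    (lam : Fin n → ℂ)
    (hlam : ∀ k : Fin n, lam k = ∑ j : Fin n, (φ j : ℂ) *
      Complex.exp (-(2 * Real.pi * Complex.I * (j.val : ℂ) * (k.val : ℂ)) / n))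
    (wfun : ℝ → ℝ)
    (w : Fin n → ℝ) (hw : ∀ k, w k = wfun ‖lam k‖)
    (R : Matrix (Fin ν) (Fin n) ℝ)
    (Rc : Matrix (Fin ν) (Fin n) ℂ) (hR : Rc = R.map Complex.ofReal)
    (φm : Fin n → ℂ) (hφm : ∀ j, φm j = (Φ ^ m) j ⟨0, hn⟩)
    (hinv : IsUnit (Rc * Fᴴ * Matrix.diagonal (fun k => (w k : ℂ)) * F * Rcᵀ))
    (obj : (Fin ν → ℂ) → ℝ)
    (hobj : ∀ ψ, obj ψ =
      ∑ k : Fin n, w k * ‖F.mulVec (φm - Rcᵀ.mulVec ψ) k‖ ^ 2)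
    (ψ : Fin ν → ℂ) (hmin : ∀ χ, obj ψ ≤ obj χ) :
    ∀ i, (ψ i).im = 0 := by
  have : NeZero n := ⟨hn.ne'⟩
  have hF_conj (i j : Fin n) : conj (F i j) = F (-i) j := by
    rw [show F = dftMatrix n from ext hF]; exact dftMatrix.conj_apply i j
  have hw_neg (k : Fin n) : w (-k) = w k := by
    have hlam_neg : lam (-k) = conj (lam k) := by
      simp only [hlam]; exact (dftMatrix.conj_sum_ofReal_mul_apply φ k).symm
    rw [hw, hw, hlam_neg, norm_conj]
  set D := diagonal fun k => (w k : ℂ)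
  have hP : (Fᴴ * D * F).map conj = Fᴴ * D * F :=
    map_conj_conjTranspose_mul_diagonal_mul _ (Equiv.neg _) w hF_conj hw_neg
  have hRc : Rc.map conj = Rc := hR ▸ map_conj_map_ofReal R
  have hφm_real : conj ∘ φm = φm := by
    have hΦ_real : Φ.map conj = Φ := by
      rw [hΦ, ← map_circulant]; exact map_conj_map_ofReal _
    funext j
    rw [Function.comp_apply, hφm]
    exact congrFun (congrFun (map_conj_pow hΦ_real m) j) _
  have hnormal : (Rc * Fᴴ * D * F * Rcᵀ) *ᵥ ψ = (Rc * Fᴴ * D * F) *ᵥ φm := by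
    simp only [hobj, mulVec_sub, mulVec_mulVec] at hmin
    have := weighted_normal_equations_of_minimizer _ _ w ψ hmin
    rwa [conjTranspose_mul, transpose_conjTranspose, show Rc.map star = Rc from hRc,
      mulVec_mulVec, Matrix.mul_assoc _ _ (F * Rcᵀ), ← Matrix.mul_assoc _ _ Rcᵀ,
      ← Matrix.mul_assoc, ← Matrix.mul_assoc] at this
  have hRP : (Rc * Fᴴ * D * F).map conj = Rc * Fᴴ * D * F := by
    rw [Matrix.mul_assoc Rc, Matrix.mul_assoc Rc, Matrix.map_mul, hRc, hP]
  have hM : (Rc * Fᴴ * D * F * Rcᵀ).map conj = Rc * Fᴴ * D * F * Rcᵀ := by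
    rw [Matrix.map_mul, hRP, transpose_map, hRc]
  have hψ_real := conj_comp_eq_of_mulVec_eq hM hinv hnormal <| by
    rw [conj_comp_mulVec, hRP, hφm_real]
  exact fun i => conj_eq_iff_im.mp (congrFun hψ_real i)

/-- The minimizer of the weighted least-squares problem for the coarse-grid
operator is real valued. -/
theorem weighted_lsq_minimizer_real (n ν : ℕ) (hn : 0 < n) (φ : Fin n → ℝ)
    (m : ℕ) (hm : 1 ≤ m)
    (Φ : Matrix (Fin n) (Fin n) ℂ)
    (hΦ : Φ = Matrix.circulant (fun j => (φ j : ℂ)))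
    (F : Matrix (Fin n) (Fin n) ℂ)
    (hF : ∀ j k : Fin n, F j k =
      Complex.exp (-(2 * Real.pi * Complex.I * (j.val : ℂ) * (k.val : ℂ)) / n))
    (lam : Fin n → ℂ)
    (hlam : ∀ k : Fin n, lam k = ∑ j : Fin n, (φ j : ℂ) *
      Complex.exp (-(2 * Real.pi * Complex.I * (j.val : ℂ) * (k.val : ℂ)) / n))
    (wfun : ℝ → ℝ) (hwfun : ∀ x, 0 < wfun x)
    (w : Fin n → ℝ) (hw : ∀ k, w k = wfun ‖lam k‖)
    (R : Matrix (Fin ν) (Fin n) ℝ)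
    (Rc : Matrix (Fin ν) (Fin n) ℂ) (hR : Rc = R.map Complex.ofReal)
    (φm : Fin n → ℂ) (hφm : ∀ j, φm j = (Φ ^ m) j ⟨0, hn⟩)
    (hinv : IsUnit (Rc * Fᴴ * Matrix.diagonal (fun k => (w k : ℂ)) * F * Rcᵀ))
    (obj : (Fin ν → ℂ) → ℝ)
    (hobj : ∀ ψ, obj ψ =
      ∑ k : Fin n, w k * ‖F.mulVec (φm - Rcᵀ.mulVec ψ) k‖ ^ 2)
    (ψ : Fin ν → ℂ) (hmin : ∀ χ, obj ψ ≤ obj χ) :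
    ∀ i, (ψ i).im = 0 :=
  weighted_lsq_minimizer_real_general n ν hn φ m Φ hΦ F hF lam hlam wfun w hw R Rc hR φm hφm hinv
    obj hobj ψ hmin
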